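/- Let m ≥ 2 and suppose there are exactly r primes. Then for every positive integer N, N ≤ m^r + N·(∑_{n=1}^∞ 1/n^m − 1). -/

import Mathlib

open Finset

/-!
Every `t ∈ (0, N]` is either divisible by `q ^ m` for some prime `q`, which happens for at most
`N / q ^ m` values of `t` per prime, or `m`-th-power-free. An `m`-th-power-free `t` is determined
by its exponent vector `(v_q t)_q ∈ {0, …, m - 1} ^ r`, so there are at most `m ^ r` of those.
Finally `∑_q 1 / q ^ m ≤ ∑_{n ≥ 2} 1 / n ^ m = ζ(m) - 1`.
-/

theorem card_filter_not_exists_pow_dvd_le (P : Finset ℕ) (hP : ∀ q ∈ P, q.Prime)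
    (hall : ∀ q : ℕ, q.Prime → q ∈ P) (m N : ℕ) :
    #{t ∈ Ioc 0 N | ¬ ∃ q ∈ P, q ^ m ∣ t} ≤ m ^ #P := by
  calc #{t ∈ Ioc 0 N | ¬ ∃ q ∈ P, q ^ m ∣ t}
      ≤ #(Fintype.piFinset fun _ : P => range m) := by
        refine card_le_card_of_injOn (fun t q => t.factorization q) ?_ ?_
        · intro t ht
          simp only [coe_filter, mem_Ioc, not_exists, not_and, Set.mem_ofPred_eq] at ht
          simp only [mem_coe, Fintype.mem_piFinset, mem_range]
          intro ⟨q, hq⟩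
          by_contra! h
          exact ht.2 q hq (((hP q hq).pow_dvd_iff_le_factorization (by omega)).2 h)
        · intro a ha b hb hab
          simp only [coe_filter, mem_Ioc, Set.mem_ofPred_eq] at ha hb
          refine Nat.eq_of_factorization_eq (by omega) (by omega) fun q => ?_
          by_cases hq : q.Prime
          · exact congrFun hab ⟨q, hall q hq⟩
          · simp [Nat.factorization_eq_zero_of_not_prime _ hq]
    _ = m ^ #P := by simp

theorem card_filter_exists_pow_dvd_le (P : Finset ℕ) (m N : ℕ) :
    (#{t ∈ Ioc 0 N | ∃ q ∈ P, q ^ m ∣ t} : ℝ) ≤ N * ∑ q ∈ P, 1 / (q : ℝ) ^ m := by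
  have hsub : {t ∈ Ioc 0 N | ∃ q ∈ P, q ^ m ∣ t} ⊆
      P.biUnion fun q => {t ∈ Ioc 0 N | q ^ m ∣ t} := by
    intro t ht
    obtain ⟨htN, q, hq, hdvd⟩ := mem_filter.1 ht
    exact mem_biUnion.2 ⟨q, hq, mem_filter.2 ⟨htN, hdvd⟩⟩
  calc (#{t ∈ Ioc 0 N | ∃ q ∈ P, q ^ m ∣ t} : ℝ)
      ≤ ∑ q ∈ P, (#{t ∈ Ioc 0 N | q ^ m ∣ t} : ℝ) := by
        exact_mod_cast (card_le_card hsub).trans card_biUnion_le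
    _ ≤ ∑ q ∈ P, (N : ℝ) / (q : ℝ) ^ m := by
        gcongr with q
        rw [Nat.Ioc_filter_dvd_card_eq_div]
        exact_mod_cast Nat.cast_div_le
    _ = N * ∑ q ∈ P, 1 / (q : ℝ) ^ m := by
        simp only [mul_sum, mul_one_div]

theorem sum_one_div_pow_le_tsum_sub_one (P : Finset ℕ) (hP : ∀ q ∈ P, 2 ≤ q) {m : ℕ}
    (hm : 2 ≤ m) : ∑ q ∈ P, 1 / (q : ℝ) ^ m ≤ (∑' n : ℕ, 1 / ((n : ℝ) + 1) ^ m) - 1 := by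
  have hsum : Summable fun n : ℕ => 1 / (n : ℝ) ^ m := Real.summable_one_div_nat_pow.2 hm
  have hshift : ∑' n : ℕ, 1 / ((n : ℝ) + 1) ^ m = ∑' n : ℕ, 1 / (n : ℝ) ^ m := by
    rw [hsum.tsum_eq_zero_add]
    simp [zero_pow (by omega : m ≠ 0)]
  have hP1 : 1 ∉ P := fun h => by have := hP 1 h; omega
  have hle := hsum.sum_le_tsum (insert 1 P) (fun _ _ => by positivity)
  rw [sum_insert hP1] at hle
  simp only [Nat.cast_one, one_pow, div_one] at hle
  linarith

theorem stmt_5_general (m r : ℕ) (hm : 2 ≤ m) (p : Fin r → ℕ) (hp : ∀ i, (p i).Prime)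
    (hall : ∀ q : ℕ, q.Prime → ∃ i, q = p i) (N : ℕ) :
    (N : ℝ) ≤ (m : ℝ) ^ r + (N : ℝ) * ((∑' n : ℕ, 1 / ((n : ℝ) + 1) ^ m) - 1) := by
  set P := univ.image p
  have hPprime : ∀ q ∈ P, q.Prime := by simpa [P] using hp
  have hPall : ∀ q : ℕ, q.Prime → q ∈ P := fun q hq => by
    obtain ⟨i, rfl⟩ := hall q hq
    exact mem_image_of_mem p (mem_univ i)
  have hsplit := (Ioc 0 N).card_filter_add_card_filter_not fun t => ∃ q ∈ P, q ^ m ∣ t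
  rw [Nat.card_Ioc, Nat.sub_zero] at hsplit
  have hfree : (#{t ∈ Ioc 0 N | ¬ ∃ q ∈ P, q ^ m ∣ t} : ℝ) ≤ m ^ r := by
    exact_mod_cast (card_filter_not_exists_pow_dvd_le P hPprime hPall m N).trans
      (Nat.pow_le_pow_right (by omega) (card_image_le.trans_eq (card_fin r)))
  have hdiv := (card_filter_exists_pow_dvd_le P m N).trans <| mul_le_mul_of_nonneg_left
    (sum_one_div_pow_le_tsum_sub_one P (fun q hq => (hPprime q hq).two_le) hm) N.cast_nonneg
  have hN : (N : ℝ) =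
      #{t ∈ Ioc 0 N | ∃ q ∈ P, q ^ m ∣ t} + #{t ∈ Ioc 0 N | ¬ ∃ q ∈ P, q ^ m ∣ t} := by
    exact_mod_cast hsplit.symm
  linarith

theorem stmt_5 (m r : ℕ) (hm : 2 ≤ m) (p : Fin r → ℕ) (hp : ∀ i, (p i).Prime)
    (hall : ∀ q : ℕ, q.Prime → ∃ i, q = p i) (N : ℕ) (hN : 0 < N) :
    (N : ℝ) ≤ (m : ℝ) ^ r + (N : ℝ) * ((∑' n : ℕ, 1 / ((n : ℝ) + 1) ^ m) - 1) :=
  stmt_5_general m r hm p hp hall N
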